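/- Let H be a real separable Hilbert space with Hilbert basis (e_n)_{n∈ℕ}, let μ be a finite Borel measure on H with finite second moment, let T : H → H be a continuous linear operator, let d ∈ ℕ and let θ = (θ_{ij}) be a real d × d matrix. Then ∫_H ‖ E_{H,d}( θ · P_{H,d}(f) ) − (E_{H,d} ∘ P_{H,d} ∘ T ∘ E_{H,d} ∘ P_{H,d})(f) ‖² dμ(f) ≤ ( ∫_H ‖f‖² dμ(f) ) · ∑_{i=1}^{d} ∑_{j=1}^{d} ( θ_{ij} − ⟨T e_j, e_i⟩ )², where θ · x denotes the matrix–vector product and in particular (P_{H,d} ∘ T ∘ E_{H,d})(x) equals the matrix with entries ⟨T e_j, e_i⟩ applied to x ∈ ℝ^d. -/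

import Mathlib

open MeasureTheory
open scoped RealInnerProductSpace

/-- The projection map `P_{H,d} : H → ℝ^d`, `x ↦ (⟪x,e₁⟫, …, ⟪x,e_d⟫)`,
associated with a Hilbert basis `e` of `H`. -/
noncomputable def projMap {H : Type*} [NormedAddCommGroup H] [InnerProductSpace ℝ H]
    (e : HilbertBasis ℕ ℝ H) (d : ℕ) (x : H) : EuclideanSpace ℝ (Fin d) :=
  WithLp.toLp 2 (fun i : Fin d => ⟪x, e i⟫)

/-- The extension map `E_{H,d} : ℝ^d → H`, `a ↦ ∑_{i=1}^d aᵢ eᵢ`,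
associated with a Hilbert basis `e` of `H`. -/
noncomputable def extMap {H : Type*} [NormedAddCommGroup H] [InnerProductSpace ℝ H]
    (e : HilbertBasis ℕ ℝ H) (d : ℕ) (a : EuclideanSpace ℝ (Fin d)) : H :=
  ∑ i : Fin d, a i • e i

/- The difference is `E (θ - M) P f`, where `M` is the matrix of `T` in the first `d` basis
vectors; `E` is an isometry, so by Cauchy–Schwarz row by row its squared norm is at most
`‖θ - M‖²_F ‖P f‖²`, and Bessel's inequality gives `‖P f‖ ≤ ‖f‖`. -/

open Matrix

theorem Matrix.sum_sq_mulVec_le {m n : Type*} [Fintype m] [Fintype n] (A : Matrix m n ℝ)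
    (x : n → ℝ) :
    ∑ i, (A *ᵥ x) i ^ 2 ≤ (∑ i, ∑ j, A i j ^ 2) * ∑ j, x j ^ 2 := by
  rw [Finset.sum_mul]
  exact Finset.sum_le_sum fun i _ => Finset.sum_mul_sq_le_sq_mul_sq _ _ _

section

variable {H : Type*} [NormedAddCommGroup H] [InnerProductSpace ℝ H] (e : HilbertBasis ℕ ℝ H)
  (d : ℕ)

noncomputable def compressionMatrix (T : H →ₗ[ℝ] H) : Matrix (Fin d) (Fin d) ℝ :=
  Matrix.of fun i j => ⟪T (e j), e i⟫

theorem HilbertBasis.orthonormal_fin : Orthonormal ℝ (fun i : Fin d => e i) :=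
  e.orthonormal.comp _ Fin.val_injective

theorem extMap_sub (a b : EuclideanSpace ℝ (Fin d)) :
    extMap e d a - extMap e d b = extMap e d (a - b) := by
  simp only [extMap, PiLp.sub_apply, sub_smul, Finset.sum_sub_distrib]

theorem norm_extMap_sq (a : EuclideanSpace ℝ (Fin d)) :
    ‖extMap e d a‖ ^ 2 = ∑ i, a i ^ 2 := by
  rw [extMap, ← real_inner_self_eq_norm_sq, (e.orthonormal_fin d).inner_sum]
  simp only [conj_trivial, sq]

theorem sum_projMap_sq_le (x : H) : ∑ i, projMap e d x i ^ 2 ≤ ‖x‖ ^ 2 := by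
  simpa [projMap, real_inner_comm, sq_abs] using
    (e.orthonormal_fin d).sum_inner_products_le (s := Finset.univ) x

theorem projMap_apply_extMap (T : H →ₗ[ℝ] H) (a : EuclideanSpace ℝ (Fin d)) :
    projMap e d (T (extMap e d a)) = WithLp.toLp 2 (compressionMatrix e d T *ᵥ a) := by
  ext i
  simp only [projMap, extMap, map_sum, map_smul, sum_inner, real_inner_smul_left,
    compressionMatrix, Matrix.mulVec, dotProduct, Matrix.of_apply, mul_comm]

theorem norm_extMap_mulVec_sub_compression_sq_le (T : H →ₗ[ℝ] H)
    (θ : Matrix (Fin d) (Fin d) ℝ) (x : H) :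
    ‖extMap e d (WithLp.toLp 2 (θ *ᵥ projMap e d x))
        - extMap e d (projMap e d (T (extMap e d (projMap e d x))))‖ ^ 2
      ≤ (∑ i, ∑ j, (θ i j - ⟪T (e j), e i⟫) ^ 2) * ‖x‖ ^ 2 := by
  rw [projMap_apply_extMap, extMap_sub, ← WithLp.toLp_sub, ← Matrix.sub_mulVec, norm_extMap_sq]
  calc ∑ i, ((θ - compressionMatrix e d T) *ᵥ projMap e d x) i ^ 2
      ≤ (∑ i, ∑ j, (θ i j - ⟪T (e j), e i⟫) ^ 2) * ∑ j, projMap e d x j ^ 2 := by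
        simpa [compressionMatrix] using Matrix.sum_sq_mulVec_le (θ - compressionMatrix e d T) _
    _ ≤ _ := by gcongr; exact sum_projMap_sq_le e d x

end

theorem stmt_9_general (H : Type*) [NormedAddCommGroup H] [InnerProductSpace ℝ H]
    [MeasurableSpace H]
    (e : HilbertBasis ℕ ℝ H)
    (μ : Measure H)
    (hμ : Integrable (fun x : H => ‖x‖ ^ 2) μ)
    (T : H →L[ℝ] H) (d : ℕ) (θ : Matrix (Fin d) (Fin d) ℝ) :
    ∫ f : H,
        ‖extMap e d (WithLp.toLp 2 (θ.mulVec (projMap e d f)))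
          - extMap e d (projMap e d (T (extMap e d (projMap e d f))))‖ ^ 2 ∂μ
      ≤ (∫ f : H, ‖f‖ ^ 2 ∂μ) *
        ∑ i : Fin d, ∑ j : Fin d, (θ i j - ⟪T (e j), e i⟫) ^ 2 := by
  set C := ∑ i : Fin d, ∑ j : Fin d, (θ i j - ⟪T (e j), e i⟫) ^ 2
  calc _ ≤ ∫ f : H, C * ‖f‖ ^ 2 ∂μ :=
        integral_mono_of_nonneg (ae_of_all _ fun _ => sq_nonneg _) (hμ.const_mul C)
          (ae_of_all _ (norm_extMap_mulVec_sub_compression_sq_le e d T.toLinearMap θ))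
    _ = (∫ f : H, ‖f‖ ^ 2 ∂μ) * C := by rw [integral_const_mul, mul_comm]

/-- the `L²(μ)` distance between the DeepONet with linear core
`x ↦ θ·x` and the finite-dimensional compression of a continuous linear
operator `T` is controlled by the entrywise distance of `θ` to the matrix
`(⟪T e_j, e_i⟫)_{ij}` of `T`. -/
theorem stmt_9 (H : Type*) [NormedAddCommGroup H] [InnerProductSpace ℝ H]
    [MeasurableSpace H] [BorelSpace H]
    (e : HilbertBasis ℕ ℝ H)
    (μ : Measure H) [IsFiniteMeasure μ]
    (hμ : Integrable (fun x : H => ‖x‖ ^ 2) μ)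
    (T : H →L[ℝ] H) (d : ℕ) (θ : Matrix (Fin d) (Fin d) ℝ) :
    ∫ f : H,
        ‖extMap e d (WithLp.toLp 2 (θ.mulVec (projMap e d f)))
          - extMap e d (projMap e d (T (extMap e d (projMap e d f))))‖ ^ 2 ∂μ
      ≤ (∫ f : H, ‖f‖ ^ 2 ∂μ) *
        ∑ i : Fin d, ∑ j : Fin d, (θ i j - ⟪T (e j), e i⟫) ^ 2 :=
  stmt_9_general H e μ hμ T d θ
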